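/- For all positive integers Δ2 and ν there exists an integer N such that for every n ≥ N the following holds: if H is a 3-multigraph on n vertices with Δ2(H) ≤ Δ2 and there exists a set V0 of ν vertices of H such that every triple of E(H) intersects V0, then e(H) ≤ f(n,ν,Δ2). -/
import Mathlib


/-- The function `g(ν, λ, s)` from the paper. -/
noncomputable def gfun (ν lam s : ℕ) : ℤ :=
  if ν ≤ 2 then 0
  else if (ν % 6 = 0 ∧ lam % 2 = 1) ∨
          (ν % 6 = 2 ∧ (lam % 6 = 1 ∨ lam % 6 = 3)) ∨
          (ν % 6 = 2 ∧ lam % 6 = 5 ∧ s < ν / 2) ∨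
          (ν % 6 = 4 ∧ lam % 2 = 1 ∧ s < ν / 2) then
    ⌊(lam : ℚ) / 3 * (ν.choose 2 : ℚ) - (ν : ℚ) / 6⌋
  else if (ν % 6 = 2 ∧ lam % 6 = 5 ∧ s = ν / 2) ∨
          (ν % 6 = 4 ∧ lam % 2 = 1 ∧ s = ν / 2) then
    ⌊(lam : ℚ) / 3 * (ν.choose 2 : ℚ) - (ν : ℚ) / 6⌋ - 1
  else if (ν % 6 = 2 ∧ lam % 6 = 4 ∧ s = 0) ∨
          (ν % 6 = 5 ∧ lam % 3 = 1 ∧ s = 0) then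
    ⌊(lam : ℚ) / 3 * (ν.choose 2 : ℚ)⌋ - 1
  else ⌊(lam : ℚ) / 3 * (ν.choose 2 : ℚ) - 2 * (s : ℚ) / 3⌋

/-- The function `f(n, ν, Δ₂)` from the paper. -/
noncomputable def ffun (n ν Δ : ℕ) : ℤ :=
  ⌊(ν : ℚ) * ((n : ℚ) - (ν : ℚ)) * (Δ : ℚ) / 2⌋ +
  if Even ((n - ν) * Δ) ∨ Even ν then gfun ν Δ 0 else gfun ν Δ (ν / 2)

/-- The codegree of a pair `p` of vertices in a 3-multigraph `H`: the number of
triples of `H` (with multiplicity) containing `p`. -/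
def codegPair {V : Type*} [DecidableEq V] (H : Multiset (Finset V)) (p : Finset V) : ℕ :=
  Multiset.card (H.filter fun t => p ⊆ t)

section aux

open Finset

lemma sum_card_filter {α β : Type*} (s : Finset α) (H : Multiset β)
    (q : α → β → Prop) [∀ a, DecidablePred (q a)] :
    ∑ a ∈ s, Multiset.card (H.filter (q a)) =
      (H.map (fun t => (s.filter (fun a => q a t)).card)).sum := by
  induction H using Multiset.induction_on with
  | empty => simp
  | cons b H ih =>
    simp only [Multiset.filter_cons, Multiset.map_cons, Multiset.sum_cons,
      Multiset.card_add, apply_ite Multiset.card, Multiset.card_singleton,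
      Multiset.card_zero, Finset.sum_add_distrib, ih, Finset.card_filter]

lemma finset_sum_map_sum {α β : Type*} (s : Finset α) (H : Multiset β) (f : α → β → ℕ) :
    ∑ a ∈ s, (H.map (f a)).sum = (H.map (fun t => ∑ a ∈ s, f a t)).sum := by
  induction H using Multiset.induction_on with
  | empty => simp
  | cons b H ih => simp [Finset.sum_add_distrib, ih]

lemma countP_eq_sum_map {β : Type*} (H : Multiset β) (p : β → Prop) [DecidablePred p] :
    H.countP p = (H.map (fun t => if p t then 1 else 0)).sum := by
  induction H using Multiset.induction_on with
  | empty => simp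
  | cons b H ih => simp [Multiset.countP_cons, ih]; omega

lemma even_sum_map {β : Type*} (H : Multiset β) (f : β → ℕ)
    (h : ∀ t ∈ H, f t % 2 = 0) : (H.map f).sum % 2 = 0 := by
  induction H using Multiset.induction_on with
  | empty => simp
  | cons b H ih =>
    simp only [Multiset.map_cons, Multiset.sum_cons]
    have h1 := h b (Multiset.mem_cons_self _ _)
    have h2 := ih (fun t ht => h t (Multiset.mem_cons_of_mem ht))
    omega

lemma sum_map_mul {β : Type*} (H : Multiset β) (k : ℕ) (f : β → ℕ) :
    (H.map (fun t => k * f t)).sum = k * (H.map f).sum := by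
  induction H using Multiset.induction_on with
  | empty => simp
  | cons b H ih => simp [ih, Nat.mul_add]

lemma countP_mono' {β : Type*} (H : Multiset β) (p q : β → Prop)
    [DecidablePred p] [DecidablePred q]
    (h : ∀ a ∈ H, p a → q a) : H.countP p ≤ H.countP q := by
  induction H using Multiset.induction_on with
  | empty => simp
  | cons b H ih =>
    have h1 := h b (Multiset.mem_cons_self _ _)
    have h2 := ih (fun t ht => h t (Multiset.mem_cons_of_mem ht))
    simp only [Multiset.countP_cons]
    by_cases hp : p b
    · simp [hp, h1 hp]; omega
    · simp [hp]; split <;> omega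

lemma cross_count {n : ℕ} (K t : Finset (Fin n)) (ht : t.card = 3) (v : Fin n) :
    ((Finset.univ \ K).filter (fun x => ({v, x} : Finset (Fin n)) ⊆ t)).card
      = if v ∈ t then 3 - (t ∩ K).card else 0 := by
  by_cases hv : v ∈ t
  · rw [if_pos hv]
    have he : (Finset.univ \ K).filter (fun x => ({v, x} : Finset (Fin n)) ⊆ t) = t \ K := by
      ext x
      simp only [Finset.mem_filter, Finset.mem_sdiff, Finset.mem_univ, true_and,
        Finset.insert_subset_iff, Finset.singleton_subset_iff, hv]
      tauto
    rw [he]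
    have := Finset.card_sdiff_add_card_inter t K
    omega
  · rw [if_neg hv, Finset.card_eq_zero, Finset.filter_eq_empty_iff]
    intro x _
    simp [Finset.insert_subset_iff, hv]

lemma inside_count {n : ℕ} (K t : Finset (Fin n)) (v : Fin n) (hvK : v ∈ K) :
    ((K.erase v).filter (fun u => ({v, u} : Finset (Fin n)) ⊆ t)).card
      = if v ∈ t then (t ∩ K).card - 1 else 0 := by
  by_cases hv : v ∈ t
  · rw [if_pos hv]
    have he : (K.erase v).filter (fun u => ({v, u} : Finset (Fin n)) ⊆ t)
        = (t ∩ K).erase v := by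
      ext u
      simp only [Finset.mem_filter, Finset.mem_erase, Finset.mem_inter,
        Finset.insert_subset_iff, Finset.singleton_subset_iff, hv, true_and]
      tauto
    rw [he, Finset.card_erase_of_mem (by simp [hv, hvK])]
  · rw [if_neg hv, Finset.card_eq_zero, Finset.filter_eq_empty_iff]
    intro x _
    simp [Finset.insert_subset_iff, hv]

lemma two_mul_choose_two (ν : ℕ) : 2 * ν.choose 2 = ν * (ν - 1) := by
  induction ν with
  | zero => rfl
  | succ k ih =>
    rw [Nat.choose_succ_succ, Nat.mul_add, ih, Nat.choose_one_right]
    rcases k with - | k'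
    · rfl
    · simp only [Nat.succ_sub_one]
      ring

end aux

open Finset

set_option maxHeartbeats 2000000 in
lemma main_bound {n ν Δ : ℕ} (hn : ν ≤ n) (H : Multiset (Finset (Fin n)))
    (K : Finset (Fin n)) (hKcard : K.card = ν)
    (h3 : ∀ t ∈ H, t.card = 3)
    (hcd : ∀ x y : Fin n, x ≠ y → codegPair H {x, y} ≤ Δ)
    (hmeet : ∀ t ∈ H, (t ∩ K).Nonempty) :
    (Multiset.card H : ℤ) ≤ ffun n ν Δ := by
  classical
  set m := Multiset.card H with hm
  set b := H.countP (fun t => (t ∩ K).card = 2) with hb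
  set c := H.countP (fun t => (t ∩ K).card = 3) with hc
  set Sv : Fin n → ℕ := fun v => ∑ x ∈ Finset.univ \ K, codegPair H {v, x} with hSv
  set Tv : Fin n → ℕ := fun v => ∑ u ∈ K.erase v, codegPair H {v, u} with hTv
  set bv : Fin n → ℕ := fun v => H.countP (fun t => v ∈ t ∧ (t ∩ K).card = 2) with hbv
  have hj : ∀ t ∈ H, 1 ≤ (t ∩ K).card ∧ (t ∩ K).card ≤ 3 := by
    intro t ht
    refine ⟨Finset.card_pos.mpr (hmeet t ht), ?_⟩
    calc (t ∩ K).card ≤ t.card := Finset.card_le_card Finset.inter_subset_left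
      _ = 3 := h3 t ht
  have hSmap : ∀ v ∈ K, Sv v
      = (H.map (fun t => if v ∈ t then 3 - (t ∩ K).card else 0)).sum := by
    intro v hv
    rw [hSv]
    simp only
    rw [show (∑ x ∈ Finset.univ \ K, codegPair H {v, x})
        = ∑ x ∈ Finset.univ \ K, Multiset.card
            (H.filter (fun t => ({v, x} : Finset (Fin n)) ⊆ t)) from rfl,
      sum_card_filter]
    exact congrArg _ (Multiset.map_congr rfl (fun t ht => cross_count K t (h3 t ht) v))
  have hTmap : ∀ v ∈ K, Tv v
      = (H.map (fun t => if v ∈ t then (t ∩ K).card - 1 else 0)).sum := by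
    intro v hv
    rw [hTv]
    simp only
    rw [show (∑ u ∈ K.erase v, codegPair H {v, u})
        = ∑ u ∈ K.erase v, Multiset.card
            (H.filter (fun t => ({v, u} : Finset (Fin n)) ⊆ t)) from rfl,
      sum_card_filter]
    exact congrArg _ (Multiset.map_congr rfl (fun t ht => inside_count K t v hv))
  have hbvmap : ∀ v : Fin n, bv v
      = (H.map (fun t => if v ∈ t ∧ (t ∩ K).card = 2 then 1 else 0)).sum := by
    intro v
    rw [hbv]
    exact countP_eq_sum_map _ _
  -- aggregate sums
  have hconst2 : (H.map (fun _ => 2)).sum = 2 * m := by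
    simp [Multiset.map_const', Multiset.sum_replicate, hm, Nat.mul_comm]
  have hSsum : (∑ v ∈ K, Sv v) + 2 * c = 2 * m := by
    rw [Finset.sum_congr rfl hSmap, finset_sum_map_sum]
    have hc2 : 2 * c = (H.map (fun t => if (t ∩ K).card = 3 then 2 else 0)).sum := by
      rw [hc, countP_eq_sum_map, ← sum_map_mul]
      exact congrArg _ (Multiset.map_congr rfl (fun t _ => by split <;> simp))
    rw [hc2, ← Multiset.sum_map_add, ← hconst2]
    refine congrArg _ (Multiset.map_congr rfl ?_)
    intro t ht
    have hsum : (∑ v ∈ K, if v ∈ t then 3 - (t ∩ K).card else 0)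
        = (t ∩ K).card * (3 - (t ∩ K).card) := by
      rw [Finset.sum_ite_mem, Finset.sum_const, smul_eq_mul, Finset.inter_comm]
    rw [hsum]
    have := hj t ht
    have h123 : (t ∩ K).card = 1 ∨ (t ∩ K).card = 2 ∨ (t ∩ K).card = 3 := by omega
    rcases h123 with h | h | h <;> simp [h]
  have hTsum : (∑ v ∈ K, Tv v) = 2 * b + 6 * c := by
    rw [Finset.sum_congr rfl hTmap, finset_sum_map_sum]
    have hb2 : 2 * b = (H.map (fun t => if (t ∩ K).card = 2 then 2 else 0)).sum := by
      rw [hb, countP_eq_sum_map, ← sum_map_mul]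
      exact congrArg _ (Multiset.map_congr rfl (fun t _ => by split <;> simp))
    have hc6 : 6 * c = (H.map (fun t => if (t ∩ K).card = 3 then 6 else 0)).sum := by
      rw [hc, countP_eq_sum_map, ← sum_map_mul]
      exact congrArg _ (Multiset.map_congr rfl (fun t _ => by split <;> simp))
    rw [hb2, hc6, ← Multiset.sum_map_add]
    refine congrArg _ (Multiset.map_congr rfl ?_)
    intro t ht
    have hsum : (∑ v ∈ K, if v ∈ t then (t ∩ K).card - 1 else 0)
        = (t ∩ K).card * ((t ∩ K).card - 1) := by
      rw [Finset.sum_ite_mem, Finset.sum_const, smul_eq_mul, Finset.inter_comm]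
    rw [hsum]
    have := hj t ht
    have h123 : (t ∩ K).card = 1 ∨ (t ∩ K).card = 2 ∨ (t ∩ K).card = 3 := by omega
    rcases h123 with h | h | h <;> simp [h]
  have hbsum : (∑ v ∈ K, bv v) = 2 * b := by
    have hbvm : ∀ v ∈ K, bv v
        = (H.map (fun t => if v ∈ t ∧ (t ∩ K).card = 2 then 1 else 0)).sum :=
      fun v _ => hbvmap v
    rw [Finset.sum_congr rfl hbvm, finset_sum_map_sum]
    have hb2 : 2 * b = (H.map (fun t => if (t ∩ K).card = 2 then 2 else 0)).sum := by
      rw [hb, countP_eq_sum_map, ← sum_map_mul]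
      exact congrArg _ (Multiset.map_congr rfl (fun t _ => by split <;> simp))
    rw [hb2]
    refine congrArg _ (Multiset.map_congr rfl ?_)
    intro t ht
    by_cases h2 : (t ∩ K).card = 2
    · simp only [h2, and_true, if_true]
      rw [Finset.sum_ite_mem, Finset.sum_const, smul_eq_mul, Finset.inter_comm, h2]
    · simp [h2]
  have hcard_diff : (Finset.univ \ K).card = n - ν := by
    rw [Finset.card_univ_diff, hKcard, Fintype.card_fin]
  have hSle : ∀ v ∈ K, Sv v ≤ Δ * (n - ν) := by
    intro v hv
    rw [hSv]
    simp only
    calc (∑ x ∈ Finset.univ \ K, codegPair H {v, x})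
        ≤ ∑ _x ∈ Finset.univ \ K, Δ := by
          refine Finset.sum_le_sum ?_
          intro x hx
          refine hcd v x ?_
          intro hvx
          rw [Finset.mem_sdiff] at hx
          exact hx.2 (hvx ▸ hv)
      _ = Δ * (n - ν) := by rw [Finset.sum_const, smul_eq_mul, hcard_diff, Nat.mul_comm]
  have hTle : ∀ v ∈ K, Tv v ≤ Δ * (ν - 1) := by
    intro v hv
    rw [hTv]
    simp only
    calc (∑ u ∈ K.erase v, codegPair H {v, u})
        ≤ ∑ _u ∈ K.erase v, Δ := by
          refine Finset.sum_le_sum ?_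
          intro u hu
          refine hcd v u ?_
          intro hvu
          exact (Finset.mem_erase.mp hu).1 hvu.symm
      _ = Δ * (ν - 1) := by
          rw [Finset.sum_const, smul_eq_mul, Finset.card_erase_of_mem hv, hKcard,
            Nat.mul_comm]
  have hSTpar : ∀ v ∈ K, (Sv v + bv v) % 2 = 0 := by
    intro v hv
    rw [hSmap v hv, hbvmap v, ← Multiset.sum_map_add]
    refine even_sum_map _ _ ?_
    intro t ht
    have := hj t ht
    by_cases hvt : v ∈ t
    · have h123 : (t ∩ K).card = 1 ∨ (t ∩ K).card = 2 ∨ (t ∩ K).card = 3 := by omega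
      rcases h123 with h | h | h <;> simp [h, hvt]
    · simp [hvt]
  have hTbpar : ∀ v ∈ K, (Tv v + bv v) % 2 = 0 := by
    intro v hv
    rw [hTmap v hv, hbvmap v, ← Multiset.sum_map_add]
    refine even_sum_map _ _ ?_
    intro t ht
    have := hj t ht
    by_cases hvt : v ∈ t
    · have h123 : (t ∩ K).card = 1 ∨ (t ∩ K).card = 2 ∨ (t ∩ K).card = 3 := by omega
      rcases h123 with h | h | h <;> simp [h, hvt]
    · simp [hvt]
  have hbvle : ∀ v : Fin n, bv v ≤ b := by
    intro v
    rw [hbv, hb]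
    exact countP_mono' _ _ _ (fun t _ h => h.2)
  -- leave quantities
  have hSA : (∑ v ∈ K, Sv v) + (∑ v ∈ K, (Δ * (n - ν) - Sv v)) = ν * (Δ * (n - ν)) := by
    rw [← Finset.sum_add_distrib]
    rw [Finset.sum_congr rfl (fun v hv => Nat.add_sub_cancel' (hSle v hv))]
    rw [Finset.sum_const, smul_eq_mul, hKcard]
  have hTL : (∑ v ∈ K, Tv v) + (∑ v ∈ K, (Δ * (ν - 1) - Tv v)) = ν * (Δ * (ν - 1)) := by
    rw [← Finset.sum_add_distrib]
    rw [Finset.sum_congr rfl (fun v hv => Nat.add_sub_cancel' (hTle v hv))]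
    rw [Finset.sum_const, smul_eq_mul, hKcard]
  have h2C : 2 * (Δ * ν.choose 2) = ν * (Δ * (ν - 1)) := by
    calc 2 * (Δ * ν.choose 2) = Δ * (2 * ν.choose 2) := by ring
      _ = Δ * (ν * (ν - 1)) := by rw [two_mul_choose_two]
      _ = ν * (Δ * (ν - 1)) := by ring
  have E2 : 2 * b + 6 * c + (∑ v ∈ K, (Δ * (ν - 1) - Tv v)) = 2 * (Δ * ν.choose 2) := by
    rw [h2C, ← hTL, hTsum]
  have hnq : ((n : ℚ) - (ν : ℚ)) = ((n - ν : ℕ) : ℚ) := by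
    rw [Nat.cast_sub hn]
  have hW : (ν:ℚ) * ((n:ℚ) - ν) * Δ = ((ν * (Δ * (n - ν)) : ℕ) : ℚ) := by
    rw [hnq]; push_cast; ring
  have hSleW : (∑ v ∈ K, Sv v) ≤ ν * (Δ * (n - ν)) := by omega
  by_cases hν2 : ν ≤ 2
  · -- case C0
    have hc0 : c = 0 := by
      rw [hc]
      refine Multiset.countP_eq_zero.mpr ?_
      intro t ht h3'
      have : (t ∩ K).card ≤ ν := hKcard ▸ Finset.card_le_card Finset.inter_subset_right
      omega
    have h2m : 2 * m ≤ ν * (Δ * (n - ν)) := by omega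
    rw [ffun]
    have hg0 : ∀ s, gfun ν Δ s = 0 := fun s => by rw [gfun, if_pos hν2]
    have hite : (if Even ((n - ν) * Δ) ∨ Even ν then gfun ν Δ 0 else gfun ν Δ (ν / 2)) = 0 := by
      split <;> exact hg0 _
    rw [hite, add_zero, Int.le_floor]
    rw [hW]
    have : ((2 * m : ℕ) : ℚ) ≤ ((ν * (Δ * (n - ν)) : ℕ) : ℚ) := by exact_mod_cast h2m
    push_cast at this ⊢
    linarith
  · by_cases hEB : Even ((n - ν) * Δ) ∨ Even ν
    · rw [ffun, if_pos hEB]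
      by_cases hC1 : ν % 2 = 0 ∧ Δ % 2 = 1
      · -- case C1
        rw [gfun, if_neg hν2, if_pos (by omega)]
        have hodd : Δ * (ν - 1) % 2 = 1 := by
          have hν1 : (ν - 1) % 2 = 1 := by omega
          rw [Nat.mul_mod, hC1.2, hν1]
        have hper : ∀ v ∈ K, 1 ≤ bv v + (Δ * (ν - 1) - Tv v) := by
          intro v hv
          have h1 := hTbpar v hv
          have h2 := hTle v hv
          omega
        have hsum1 : ν ≤ 2 * b + (∑ v ∈ K, (Δ * (ν - 1) - Tv v)) := by
          have : (∑ _v ∈ K, 1) ≤ ∑ v ∈ K, (bv v + (Δ * (ν - 1) - Tv v)) :=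
            Finset.sum_le_sum hper
          rw [Finset.sum_const, smul_eq_mul, mul_one, hKcard, Finset.sum_add_distrib,
            hbsum] at this
          omega
        have h6c : 6 * c + ν ≤ 2 * (Δ * ν.choose 2) := by omega
        have e1 : 2 * m ≤ ν * (Δ * (n - ν)) + 2 * c := by omega
        have g1 : ((m : ℤ) - c) ≤ ⌊(ν:ℚ) * ((n:ℚ) - ν) * Δ / 2⌋ := by
          rw [Int.le_floor]
          have e1q : ((2 * m : ℕ) : ℚ) ≤ ((ν * (Δ * (n - ν)) + 2 * c : ℕ) : ℚ) :=
            Nat.cast_le.mpr e1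
          push_cast at e1q
          rw [hnq]
          push_cast
          linarith
        have g2 : (c : ℤ) ≤ ⌊(Δ:ℚ) / 3 * (ν.choose 2 : ℚ) - (ν:ℚ) / 6⌋ := by
          rw [Int.le_floor]
          have e2q : ((6 * c + ν : ℕ) : ℚ) ≤ ((2 * (Δ * ν.choose 2) : ℕ) : ℚ) :=
            Nat.cast_le.mpr h6c
          push_cast at e2q
          push_cast
          linarith
        have := add_le_add g1 g2
        omega
      · by_cases hC2 : (ν % 6 = 2 ∧ Δ % 6 = 4) ∨ (ν % 6 = 5 ∧ Δ % 3 = 1)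
        · -- case C2
          rw [gfun, if_neg hν2, if_neg (by omega), if_neg (by omega), if_pos (by omega)]
          -- Δ * choose mod 3 = 1
          have hDC3 : (Δ * ν.choose 2) % 3 = 1 := by
            rcases hC2 with ⟨hν6, hΔ6⟩ | ⟨hν6, hΔ3⟩
            · have hν1' : (ν - 1) % 6 = 1 := by omega
              have h1 : (Δ * (ν - 1)) % 6 = 4 := by rw [Nat.mul_mod, hΔ6, hν1']
              have h2 : (ν * (Δ * (ν - 1))) % 6 = 2 := by rw [Nat.mul_mod, h1, hν6]
              omega
            · have hν3 : ν % 3 = 2 := by omega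
              have hν1' : (ν - 1) % 3 = 1 := by omega
              have h1 : (Δ * (ν - 1)) % 3 = 1 := by rw [Nat.mul_mod, hΔ3, hν1']
              have h2 : (ν * (Δ * (ν - 1))) % 3 = 2 := by rw [Nat.mul_mod, h1, hν3]
              omega
          have hΔν1 : Δ * (ν - 1) % 2 = 0 := by
            rcases hC2 with ⟨hν6, hΔ6⟩ | ⟨hν6, hΔ3⟩
            · have h1 : Δ % 2 = 0 := by omega
              rw [Nat.mul_mod, h1]
              simp
            · have h1 : (ν - 1) % 2 = 0 := by omega
              rw [Nat.mul_mod, h1]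
              simp
          have hWeven : (ν * (Δ * (n - ν))) % 2 = 0 := by
            rcases hC2 with ⟨hν6, hΔ6⟩ | ⟨hν6, hΔ3⟩
            · have h1 : ν % 2 = 0 := by omega
              rw [Nat.mul_mod, h1]
              simp
            · have h1 : ν % 2 = 1 := by omega
              have h2 : Even ((n - ν) * Δ) := by
                rcases hEB with h | h
                · exact h
                · rw [Nat.even_iff] at h; omega
              rw [Nat.even_iff] at h2
              have h3 : (Δ * (n - ν)) % 2 = 0 := by rw [Nat.mul_comm]; exact h2
              rw [Nat.mul_mod, h3]
              simp
          -- rule out 2b + L = 2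
          have hne2 : ¬ (2 * b + (∑ v ∈ K, (Δ * (ν - 1) - Tv v)) = 2) := by
            intro heq
            have hLpar : (∑ v ∈ K, (Δ * (ν - 1) - Tv v)) % 2 = 0 := by omega
            have hcases : (b = 1 ∧ (∑ v ∈ K, (Δ * (ν - 1) - Tv v)) = 0)
                ∨ (b = 0 ∧ (∑ v ∈ K, (Δ * (ν - 1) - Tv v)) = 2) := by omega
            rcases hcases with ⟨hb1, hL0⟩ | ⟨hb0, hL2⟩
            · -- one triple with two vertices in K, empty leave: parity contradiction
              have hpos : 0 < H.countP (fun t => (t ∩ K).card = 2) := by omega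
              obtain ⟨t₀, ht₀H, ht₀2⟩ := Multiset.countP_pos.mp hpos
              obtain ⟨v, hv⟩ := hmeet t₀ ht₀H
              rw [Finset.mem_inter] at hv
              have hbv1 : 0 < bv v := by
                rw [hbv]
                exact Multiset.countP_pos.mpr ⟨t₀, ht₀H, ⟨hv.1, ht₀2⟩⟩
              have hbv1' : bv v = 1 := by have := hbvle v; omega
              have h1 := hTbpar v hv.2
              have h2 := hTle v hv.2
              have hLv : 1 ≤ Δ * (ν - 1) - Tv v := by omega
              have : 1 ≤ ∑ v ∈ K, (Δ * (ν - 1) - Tv v) :=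
                le_trans hLv (Finset.single_le_sum (f := fun v => Δ * (ν - 1) - Tv v)
                  (fun i _ => Nat.zero_le _) hv.2)
              omega
            · -- leave of size two: parity contradiction via two vertices
              have hbv0 : ∀ v : Fin n, bv v = 0 := fun v => by have := hbvle v; omega
              obtain ⟨w0, hw0K, hw0ne⟩ := Finset.exists_ne_zero_of_sum_ne_zero
                (show (∑ v ∈ K, (Δ * (ν - 1) - Tv v)) ≠ 0 by omega)
              have hTu_even : Tv w0 % 2 = 0 := by
                have := hTbpar w0 hw0K
                rw [hbv0 w0] at this
                omega
              have hLu_le : Δ * (ν - 1) - Tv w0 ≤ ∑ v ∈ K, (Δ * (ν - 1) - Tv v) :=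
                Finset.single_le_sum (f := fun v => Δ * (ν - 1) - Tv v)
                  (fun i _ => Nat.zero_le _) hw0K
              have hTle0 := hTle w0 hw0K
              have hLu2 : Δ * (ν - 1) - Tv w0 = 2 := by omega
              have hTu_lt : Tv w0 < Δ * (ν - 1) := by omega
              have hsum_lt : (∑ x ∈ K.erase w0, codegPair H {w0, x}) < ∑ _x ∈ K.erase w0, Δ := by
                rw [Finset.sum_const, smul_eq_mul, Finset.card_erase_of_mem hw0K, hKcard,
                  Nat.mul_comm]
                have : Tv w0 = ∑ x ∈ K.erase w0, codegPair H {w0, x} := by rw [hTv]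
                omega
              obtain ⟨w, hw, hwlt⟩ := Finset.exists_lt_of_sum_lt hsum_lt
              rw [Finset.mem_erase] at hw
              have hwK := hw.2
              have hwne : w ≠ w0 := hw.1
              -- Tv w is small
              have hw0_mem : w0 ∈ K.erase w := Finset.mem_erase.mpr ⟨hwne.symm, hw0K⟩
              have hTw_le : Tv w ≤ codegPair H {w, w0} + Δ * (ν - 1 - 1) := by
                have hTww : Tv w = ∑ x ∈ K.erase w, codegPair H {w, x} := by rw [hTv]
                rw [hTww, ← Finset.add_sum_erase _ _ hw0_mem]
                have : (∑ x ∈ (K.erase w).erase w0, codegPair H {w, x})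
                    ≤ ∑ _x ∈ (K.erase w).erase w0, Δ := by
                  refine Finset.sum_le_sum ?_
                  intro x hx
                  rw [Finset.mem_erase, Finset.mem_erase] at hx
                  exact hcd w x (fun hh => hx.2.1 hh.symm)
                rw [Finset.sum_const, smul_eq_mul, Finset.card_erase_of_mem hw0_mem,
                  Finset.card_erase_of_mem hwK, hKcard, Nat.mul_comm] at this
                omega
              have hpair : codegPair H {w, w0} < Δ := by
                rw [Finset.pair_comm]
                exact hwlt
              have hmul : Δ * (ν - 1 - 1) + Δ = Δ * (ν - 1) := by
                have h' : ν - 1 = (ν - 1 - 1) + 1 := by omega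
                conv_rhs => rw [h']
                rw [Nat.mul_add, Nat.mul_one]
              have hTw_even : Tv w % 2 = 0 := by
                have := hTbpar w hwK
                rw [hbv0 w] at this
                omega
              have hLw2 : 2 ≤ Δ * (ν - 1) - Tv w := by omega
              have hpair_sum : (Δ * (ν - 1) - Tv w0) + (Δ * (ν - 1) - Tv w)
                  ≤ ∑ v ∈ K, (Δ * (ν - 1) - Tv v) := by
                have hsub : ({w0, w} : Finset (Fin n)) ⊆ K := by
                  intro x hx
                  rw [Finset.mem_insert, Finset.mem_singleton] at hx
                  rcases hx with rfl | rfl <;> assumption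
                calc (Δ * (ν - 1) - Tv w0) + (Δ * (ν - 1) - Tv w)
                    = ∑ v ∈ ({w0, w} : Finset (Fin n)), (Δ * (ν - 1) - Tv v) :=
                      (Finset.sum_pair (f := fun v => Δ * (ν - 1) - Tv v) hwne.symm).symm
                  _ ≤ ∑ v ∈ K, (Δ * (ν - 1) - Tv v) := Finset.sum_le_sum_of_subset hsub
              omega
          have h8 : 8 ≤ 2 * b + (∑ v ∈ K, (Δ * (ν - 1) - Tv v)) := by omega
          have hmain : 6 * m + 8 ≤ 3 * (ν * (Δ * (n - ν))) + 2 * (Δ * ν.choose 2) := by omega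
          -- floors
          set u := ν * (Δ * (n - ν)) / 2 with hu
          have hu2 : ν * (Δ * (n - ν)) = 2 * u := by omega
          have hfl1 : ⌊(ν:ℚ) * ((n:ℚ) - ν) * Δ / 2⌋ = (u : ℤ) := by
            rw [hW, hu2]
            rw [Int.floor_eq_iff]
            push_cast
            constructor <;> linarith
          set k := Δ * ν.choose 2 / 3 with hk
          have hk2 : Δ * ν.choose 2 = 3 * k + 1 := by omega
          have hfl2 : ⌊(Δ:ℚ) / 3 * (ν.choose 2 : ℚ)⌋ = (k : ℤ) := by
            have hq : (Δ:ℚ) / 3 * (ν.choose 2 : ℚ) = ((Δ * ν.choose 2 : ℕ) : ℚ) / 3 := by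
              push_cast
              ring
            rw [hq, hk2]
            rw [Int.floor_eq_iff]
            push_cast
            constructor <;> linarith
          rw [hfl1, hfl2]
          omega
        · -- case C3
          rw [gfun, if_neg hν2, if_neg (by omega), if_neg (by omega), if_neg (by omega)]
          have e1 : 2 * m ≤ ν * (Δ * (n - ν)) + 2 * c := by omega
          have h6c : 6 * c ≤ 2 * (Δ * ν.choose 2) := by omega
          have g1 : ((m : ℤ) - c) ≤ ⌊(ν:ℚ) * ((n:ℚ) - ν) * Δ / 2⌋ := by
            rw [Int.le_floor]
            have e1q : ((2 * m : ℕ) : ℚ) ≤ ((ν * (Δ * (n - ν)) + 2 * c : ℕ) : ℚ) :=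
              Nat.cast_le.mpr e1
            push_cast at e1q
            rw [hnq]
            push_cast
            linarith
          have g2 : (c : ℤ) ≤ ⌊(Δ:ℚ) / 3 * (ν.choose 2 : ℚ) - 2 * ((0:ℕ):ℚ) / 3⌋ := by
            rw [Int.le_floor]
            have e2q : ((6 * c : ℕ) : ℚ) ≤ ((2 * (Δ * ν.choose 2) : ℕ) : ℚ) :=
              Nat.cast_le.mpr h6c
            push_cast at e2q
            push_cast
            linarith
          have := add_le_add g1 g2
          omega
    · rw [ffun, if_neg hEB]
      -- case C4
      push_neg at hEB
      obtain ⟨hEB1, hEB2⟩ := hEB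
      rw [Nat.not_even_iff] at hEB1 hEB2
      rw [gfun, if_neg hν2, if_neg (by omega), if_neg (by omega), if_neg (by omega)]
      have hΔν1 : Δ * (ν - 1) % 2 = 0 := by
        have h1 : (ν - 1) % 2 = 0 := by omega
        rw [Nat.mul_mod, h1]
        simp
      have hΔn : Δ * (n - ν) % 2 = 1 := by
        rw [Nat.mul_comm]
        exact hEB1
      have hW'odd : (ν * (Δ * (n - ν))) % 2 = 1 := by
        rw [Nat.mul_mod, hEB2, hΔn]
      -- odd vertices
      have ho_le : (K.filter (fun v => bv v % 2 = 1)).card ≤ ν := by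
        rw [← hKcard]
        exact Finset.card_filter_le _ _
      have h2b_o : (K.filter (fun v => bv v % 2 = 1)).card ≤ 2 * b := by
        rw [← hbsum]
        calc (K.filter (fun v => bv v % 2 = 1)).card
            = ∑ _v ∈ K.filter (fun v => bv v % 2 = 1), 1 := by
              rw [Finset.sum_const, smul_eq_mul, mul_one]
          _ ≤ ∑ v ∈ K.filter (fun v => bv v % 2 = 1), bv v := by
              refine Finset.sum_le_sum ?_
              intro v hv
              have := (Finset.mem_filter.mp hv).2
              omega
          _ ≤ ∑ v ∈ K, bv v := Finset.sum_le_sum_of_subset (Finset.filter_subset _ _)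
      have hL_o : (K.filter (fun v => bv v % 2 = 1)).card
          ≤ ∑ v ∈ K, (Δ * (ν - 1) - Tv v) := by
        calc (K.filter (fun v => bv v % 2 = 1)).card
            = ∑ _v ∈ K.filter (fun v => bv v % 2 = 1), 1 := by
              rw [Finset.sum_const, smul_eq_mul, mul_one]
          _ ≤ ∑ v ∈ K.filter (fun v => bv v % 2 = 1), (Δ * (ν - 1) - Tv v) := by
              refine Finset.sum_le_sum ?_
              intro v hv
              rw [Finset.mem_filter] at hv
              have h1 := hTbpar v hv.1
              have h2 := hTle v hv.1
              have h3 := hv.2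
              omega
          _ ≤ ∑ v ∈ K, (Δ * (ν - 1) - Tv v) :=
              Finset.sum_le_sum_of_subset (Finset.filter_subset _ _)
      have hA_o : ν - (K.filter (fun v => bv v % 2 = 1)).card
          ≤ ∑ v ∈ K, (Δ * (n - ν) - Sv v) := by
        have hcards := Finset.card_filter_add_card_filter_not
          (s := K) (p := fun v => bv v % 2 = 1)
        calc ν - (K.filter (fun v => bv v % 2 = 1)).card
            = (K.filter (fun v => ¬ bv v % 2 = 1)).card := by rw [← hKcard]; omega
          _ = ∑ _v ∈ K.filter (fun v => ¬ bv v % 2 = 1), 1 := by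
              rw [Finset.sum_const, smul_eq_mul, mul_one]
          _ ≤ ∑ v ∈ K.filter (fun v => ¬ bv v % 2 = 1), (Δ * (n - ν) - Sv v) := by
              refine Finset.sum_le_sum ?_
              intro v hv
              rw [Finset.mem_filter] at hv
              have h1 := hSTpar v hv.1
              have h2 := hSle v hv.1
              have h3 := hv.2
              omega
          _ ≤ ∑ v ∈ K, (Δ * (n - ν) - Sv v) :=
              Finset.sum_le_sum_of_subset (Finset.filter_subset _ _)
      -- main inequality
      have hmain : 6 * m + 2 * ν ≤ 3 * (ν * (Δ * (n - ν))) + 2 * (Δ * ν.choose 2) := by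
        omega
      -- floors
      set u := ν * (Δ * (n - ν)) / 2 with hu
      have hu2 : ν * (Δ * (n - ν)) = 2 * u + 1 := by omega
      have hfl1 : ⌊(ν:ℚ) * ((n:ℚ) - ν) * Δ / 2⌋ = (u : ℤ) := by
        rw [hW, hu2]
        rw [Int.floor_eq_iff]
        push_cast
        constructor <;> linarith
      rw [hfl1]
      have hfinal : 6 * m + 2 * ν ≤ 6 * u + 2 * (Δ * ν.choose 2) + 2 := by omega
      have hs2 : 2 * (ν / 2) = ν - 1 := by omega
      have g2 : ((m : ℤ) - u) ≤ ⌊(Δ:ℚ) / 3 * (ν.choose 2 : ℚ) - 2 * ((ν / 2 : ℕ):ℚ) / 3⌋ := by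
        rw [Int.le_floor]
        have e2q : ((6 * m + 2 * ν : ℕ) : ℚ) ≤ ((6 * u + 2 * (Δ * ν.choose 2) + 2 : ℕ) : ℚ) :=
          Nat.cast_le.mpr hfinal
        have hsq : ((2 * (ν / 2) : ℕ) : ℚ) = ((ν : ℚ) - 1) := by
          rw [hs2, Nat.cast_sub (by omega)]
          norm_num
        push_cast at e2q hsq
        push_cast
        linarith
      omega

/-- if every triple of a 3-multigraph `H` on `n` vertices (`n` large)
with maximum codegree at most `Δ₂` meets a fixed set of `ν` vertices, then
`e(H) ≤ f(n, ν, Δ₂)`. -/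
theorem stmt_4 (Δ₂ ν : ℕ) (hΔ : 0 < Δ₂) (hν : 0 < ν) :
    ∃ N : ℕ, ∀ n : ℕ, N ≤ n →
      ∀ H : Multiset (Finset (Fin n)),
        (∀ t ∈ H, t.card = 3) →
        (∀ x y : Fin n, x ≠ y → codegPair H {x, y} ≤ Δ₂) →
        (∃ V₀ : Finset (Fin n), V₀.card = ν ∧ ∀ t ∈ H, (t ∩ V₀).Nonempty) →
        (Multiset.card H : ℤ) ≤ ffun n ν Δ₂ := by
  refine ⟨ν, ?_⟩
  intro n hn H h3 hcd hV
  obtain ⟨V₀, hV₀card, hV₀meet⟩ := hV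
  exact main_bound hn H V₀ hV₀card h3 hcd hV₀meet
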